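/- There exist a finite nonempty alphabet X and fuzzy finite automata F and G over X such that F is DD3-directable but not DD2-directable, and G is DD2-directable but not DD3-directable. (For instance, one may take X = {x, y}, F = ({a, b}, f) with f(a,x,a) = 0.2, f(a,x,b) = f(a,y,a) = f(b,x,b) = f(b,y,b) = 1 and all other values 0, and G = ({a, b}, g) over {x} with g(a,x,b) = 1 and all other values 0.) -/

import Mathlib

open scoped Classical

/-- Extended fuzzy transition function `f*` of a fuzzy finite automaton. -/
noncomputable def fstar {A X : Type*} [Fintype A] [Nonempty A]
    (f : A → X → A → unitInterval) : A → List X → A → unitInterval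
  | a, [], b => if b = a then 1 else 0
  | a, x :: v, b => Finset.univ.sup' Finset.univ_nonempty fun c => min (f a x c) (fstar f c v b)

/-- `F(a, w)`: the set of states reachable from `a` by `w` with positive degree. -/
def freach {A X : Type*} [Fintype A] [Nonempty A]
    (f : A → X → A → unitInterval) (a : A) (w : List X) : Set A :=
  {b | 0 < fstar f a w b}

/-- A word is DD1-directing: some state `c` is reached from every state with the same
positive degree `r`, and no other state is reachable. -/
def IsDD1 {A X : Type*} [Fintype A] [Nonempty A] (f : A → X → A → unitInterval)
    (w : List X) : Prop :=
  ∃ (c : A) (r : unitInterval), 0 < r ∧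
    ∀ a, fstar f a w c = r ∧ ∀ b, b ≠ c → fstar f a w b = 0

/-- A word is DD2-directing: the fuzzy set of reached states is independent of the start. -/
def IsDD2 {A X : Type*} [Fintype A] [Nonempty A] (f : A → X → A → unitInterval)
    (w : List X) : Prop :=
  ∀ a b c, fstar f a w c = fstar f b w c

/-- A word is DD3-directing: some state `c` has positive and maximal reachability degree
from every state. -/
def IsDD3 {A X : Type*} [Fintype A] [Nonempty A] (f : A → X → A → unitInterval)
    (w : List X) : Prop :=
  ∃ c, ∀ a, 0 < fstar f a w c ∧ ∀ b, fstar f a w b ≤ fstar f a w c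

def DD1set {A X : Type*} [Fintype A] [Nonempty A] (f : A → X → A → unitInterval) :
    Set (List X) := {w | IsDD1 f w}

def DD2set {A X : Type*} [Fintype A] [Nonempty A] (f : A → X → A → unitInterval) :
    Set (List X) := {w | IsDD2 f w}

def DD3set {A X : Type*} [Fintype A] [Nonempty A] (f : A → X → A → unitInterval) :
    Set (List X) := {w | IsDD3 f w}

/-!
Both automata are crisp, over a one-letter alphabet and the states `false < true`.
In `trapFFA` the transition relation is `≤`, which is idempotent, so every nonempty word acts
as `≤`: `true` is reached with degree 1 from every state (DD3), but `false` only from `false`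
(not DD2). In `deadEndFFA` it is `<`, whose square is empty, so the word `xx` reaches nothing from
anywhere (DD2), while no nonempty word reaches anything from `true` (not DD3).
The empty word directs neither, as there are two states.
-/

section
variable {A X : Type*} [Fintype A] [Nonempty A] {f : A → X → A → unitInterval}

lemma fstar_nil (a b : A) : fstar f a [] b = if b = a then 1 else 0 := rfl

lemma fstar_cons (a : A) (x : X) (v : List X) (b : A) :
    fstar f a (x :: v) b =
      Finset.univ.sup' Finset.univ_nonempty fun c => min (f a x c) (fstar f c v b) := rfl

lemma fstar_singleton (a : A) (x : X) (b : A) : fstar f a [x] b = f a x b := by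
  rw [fstar_cons]
  refine le_antisymm (Finset.sup'_le _ _ fun c _ => ?_) ?_
  · by_cases hc : c = b
    · exact hc ▸ min_le_left _ _
    · simp [fstar_nil, Ne.symm hc]
  · exact Finset.le_sup'_of_le _ (Finset.mem_univ b) (by simp [fstar_nil, unitInterval.le_one'])

lemma fstar_cons_eq_zero {a : A} {x : X} {v : List X} {b : A}
    (h : ∀ c, f a x c = 0 ∨ fstar f c v b = 0) : fstar f a (x :: v) b = 0 := by
  rw [fstar_cons]
  refine le_antisymm (Finset.sup'_le _ _ fun c _ => ?_) unitInterval.nonneg'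
  rcases h c with h | h <;> simp [h]

lemma fstar_cons_eq_of_comp_eq
    (hf : ∀ a x y b,
      Finset.univ.sup' Finset.univ_nonempty (fun c => min (f a x c) (f c y b)) = f a x b)
    (a : A) (x : X) (v : List X) (b : A) : fstar f a (x :: v) b = f a x b := by
  induction v generalizing a x with
  | nil => exact fstar_singleton a x b
  | cons y v ih => simp only [fstar_cons (v := y :: v), ih, hf]

lemma subsingleton_of_isDD2_nil (h : IsDD2 f []) : Subsingleton A := by
  refine ⟨fun a b => by_contra fun hab => ?_⟩
  simpa [fstar_nil, hab] using h a b a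

lemma subsingleton_of_isDD3_nil (h : IsDD3 f []) : Subsingleton A := by
  obtain ⟨c, hc⟩ := h
  have hc' : ∀ a, c = a := fun a => by_contra fun hca => by simpa [fstar_nil, hca] using (hc a).1
  exact ⟨fun a b => (hc' a).symm.trans (hc' b)⟩
end

noncomputable def trapFFA : Bool → Unit → Bool → unitInterval := fun a _ c => if a ≤ c then 1 else 0

noncomputable def deadEndFFA : Bool → Unit → Bool → unitInterval := fun a _ c => if a < c then 1 else 0

lemma fstar_trapFFA (a : Bool) (x : Unit) (v : List Unit) (b : Bool) :
    fstar trapFFA a (x :: v) b = if a ≤ b then 1 else 0 := by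
  refine fstar_cons_eq_of_comp_eq (fun p _ _ q => ?_) a x v b
  cases p <;> cases q <;> simp [trapFFA, Fintype.univ_bool, unitInterval.le_one']

lemma isDD3_trapFFA : IsDD3 trapFFA [()] :=
  ⟨true, fun a => by simp [fstar_trapFFA, unitInterval.le_one']⟩

lemma not_isDD2_trapFFA : ∀ w, ¬ IsDD2 trapFFA w
  | [], h => not_subsingleton Bool (subsingleton_of_isDD2_nil h)
  | _ :: _, h => by simpa [fstar_trapFFA] using h false true false

lemma fstar_deadEndFFA_true (x : Unit) (v : List Unit) (b : Bool) :
    fstar deadEndFFA true (x :: v) b = 0 :=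
  fstar_cons_eq_zero fun c => Or.inl (by simp [deadEndFFA])

lemma isDD2_deadEndFFA : IsDD2 deadEndFFA [(), ()] := by
  have hzero : ∀ a b, fstar deadEndFFA a [(), ()] b = 0 := by
    refine fun a b => fstar_cons_eq_zero fun c => ?_
    cases a <;> cases c <;> simp [deadEndFFA, fstar_deadEndFFA_true]
  exact fun a b c => (hzero a c).trans (hzero b c).symm

lemma not_isDD3_deadEndFFA : ∀ w, ¬ IsDD3 deadEndFFA w
  | [], h => not_subsingleton Bool (subsingleton_of_isDD3_nil h)
  | _ :: _, ⟨c, hc⟩ => by simpa [fstar_deadEndFFA_true] using (hc true).1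

/-- There are a finite nonempty alphabet `X` and FFAs `F`, `G` over `X` such that `F` is
DD3-directable but not DD2-directable, and `G` is DD2-directable but not DD3-directable. -/
theorem stmt19 :
    ∃ (X : Type) (iXF : Fintype X) (iXN : Nonempty X)
      (A : Type) (iAF : Fintype A) (iAN : Nonempty A)
      (f : A → X → A → unitInterval)
      (B : Type) (iBF : Fintype B) (iBN : Nonempty B)
      (g : B → X → B → unitInterval),
      (∃ w : List X, @IsDD3 A X iAF iAN f w) ∧
      ¬ (∃ w : List X, @IsDD2 A X iAF iAN f w) ∧
      (∃ w : List X, @IsDD2 B X iBF iBN g w) ∧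
      ¬ (∃ w : List X, @IsDD3 B X iBF iBN g w) :=
  ⟨Unit, inferInstance, inferInstance, Bool, inferInstance, inferInstance, trapFFA,
    Bool, inferInstance, inferInstance, deadEndFFA, ⟨_, isDD3_trapFFA⟩,
    fun ⟨w, h⟩ => not_isDD2_trapFFA w h, ⟨_, isDD2_deadEndFFA⟩,
    fun ⟨w, h⟩ => not_isDD3_deadEndFFA w h⟩
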